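/- arXiv:2205.15100 — 2 statements merged into one kernel-verified Lean document; each statement's English description precedes it below -/
import Mathlib

section
/- Let P-hat and P be orthogonal projections on R^d, and suppose P-hat decomposes as P-hat = P-hat_{≤r} + P-hat_{>r} with P-hat_{≤r}, P-hat_{>r} orthogonal projections having mutually orthogonal ranges contained in Im(P-hat). Then for any vector α in the range of P, ‖(P-hat − P)α‖ ≤ 2 ‖(P-hat_{≤r} − P)α‖ ≤ 2 ‖P-hat_{≤r} − P‖_op ‖α‖. -/
/-!
Since `P̂_{>r} P̂_{≤r} = 0` and `Pα = α`, we have `P̂_{>r} (P̂_{≤r} − P) α = −P̂_{>r} α`, so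
`(P̂ − P) α = (I − P̂_{>r}) (P̂_{≤r} − P) α`. As `I − P̂_{>r}` is an orthogonal projection it does
not increase norms, which gives the first inequality even without the factor `2`; the second is
the definition of the operator norm.
-/

open Matrix

noncomputable def enorm4 {m : Type*} [Fintype m] (v : m → ℝ) : ℝ :=
  Real.sqrt (v ⬝ᵥ v)

noncomputable def opNorm4 {m n : ℕ} (M : Matrix (Fin m) (Fin n) ℝ) : ℝ :=
  ‖LinearMap.toContinuousLinearMap (Matrix.toEuclideanLin M)‖

open scoped Matrix.Norms.L2Operator

lemma enorm4_eq_norm {m : Type*} [Fintype m] (v : m → ℝ) :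
    enorm4 v = ‖WithLp.toLp 2 v‖ := by
  rw [enorm4, EuclideanSpace.norm_eq, dotProduct]
  simp [sq]

lemma enorm4_nonneg {m : Type*} [Fintype m] (v : m → ℝ) : 0 ≤ enorm4 v :=
  Real.sqrt_nonneg _

lemma enorm4_mulVec_le_opNorm4 {m n : ℕ} (M : Matrix (Fin m) (Fin n) ℝ) (v : Fin n → ℝ) :
    enorm4 (M *ᵥ v) ≤ opNorm4 M * enorm4 v := by
  rw [enorm4_eq_norm, enorm4_eq_norm]
  exact M.l2_opNorm_mulVec _

namespace Matrix

variable {n R : Type*} [Fintype n]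

lemma isStarProjection_of_isSymm [Semiring R] [StarRing R] [TrivialStar R] {Q : Matrix n n R}
    (hsymm : Q.IsSymm) (hidem : Q * Q = Q) : IsStarProjection Q :=
  ⟨hidem, by rw [IsSelfAdjoint, star_eq_conjTranspose, conjTranspose_eq_transpose_of_trivial,
    hsymm.eq]⟩

lemma IsSymm.mul_eq_zero_comm [CommSemiring R] {Q S : Matrix n n R} (hQ : Q.IsSymm)
    (hS : S.IsSymm) (h : Q * S = 0) : S * Q = 0 := by
  simpa [transpose_mul, hQ.eq, hS.eq] using congrArg (·ᵀ) h

lemma add_sub_mulVec_eq_one_sub_mulVec [DecidableEq n] [CommRing R] (Q S P : Matrix n n R)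
    (hSQ : S * Q = 0) {v : n → R} (hv : P *ᵥ v = v) :
    (Q + S - P) *ᵥ v = (1 - S) *ᵥ ((Q - P) *ᵥ v) := by
  rw [mulVec_mulVec, sub_mul, one_mul, mul_sub, hSQ, zero_sub, sub_neg_eq_add, add_mulVec,
    sub_mulVec, add_mulVec, sub_mulVec, ← mulVec_mulVec, hv]
  abel

end Matrix

lemma IsStarProjection.enorm4_mulVec_le {n : Type*} [Fintype n] [DecidableEq n]
    {Q : Matrix n n ℝ} (hQ : IsStarProjection Q) (v : n → ℝ) : enorm4 (Q *ᵥ v) ≤ enorm4 v := by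
  rw [enorm4_eq_norm, enorm4_eq_norm]
  calc ‖WithLp.toLp 2 (Q *ᵥ v)‖ ≤ ‖Q‖ * ‖WithLp.toLp 2 v‖ := Q.l2_opNorm_mulVec _
    _ ≤ ‖WithLp.toLp 2 v‖ := mul_le_of_le_one_left (norm_nonneg _) (hQ.norm_le Q)

theorem proj_diff_norm_bound_general {d : ℕ}
    (P Phat Ple Pgt : Matrix (Fin d) (Fin d) ℝ)
    (hLesymm : Ple.IsSymm)
    (hGtsymm : Pgt.IsSymm) (hGtidem : Pgt * Pgt = Pgt)
    (hdecomp : Phat = Ple + Pgt) (horth : Ple * Pgt = 0)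
    (α : Fin d → ℝ) (hα : P *ᵥ α = α) :
    enorm4 ((Phat - P) *ᵥ α) ≤ 2 * enorm4 ((Ple - P) *ᵥ α) ∧
    2 * enorm4 ((Ple - P) *ᵥ α) ≤ 2 * opNorm4 (Ple - P) * enorm4 α := by
  have hfactor : (Phat - P) *ᵥ α = (1 - Pgt) *ᵥ ((Ple - P) *ᵥ α) := by
    rw [hdecomp]
    exact add_sub_mulVec_eq_one_sub_mulVec _ _ _ (hLesymm.mul_eq_zero_comm hGtsymm horth) hα
  have hcomplement : IsStarProjection (1 - Pgt) :=
    (isStarProjection_of_isSymm hGtsymm hGtidem).one_sub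
  constructor
  · calc enorm4 ((Phat - P) *ᵥ α) ≤ enorm4 ((Ple - P) *ᵥ α) :=
          hfactor ▸ hcomplement.enorm4_mulVec_le _
      _ ≤ 2 * enorm4 ((Ple - P) *ᵥ α) := by linarith [enorm4_nonneg ((Ple - P) *ᵥ α)]
  · rw [mul_assoc]
    exact mul_le_mul_of_nonneg_left (enorm4_mulVec_le_opNorm4 _ _) zero_le_two

/-- If `P̂ = P̂_{≤r} + P̂_{>r}` with `P̂_{≤r}, P̂_{>r}` orthogonal projections
having mutually orthogonal ranges, and `P` is an orthogonal projection, then for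
any `α` in the range of `P`,
`‖(P̂ − P)α‖ ≤ 2‖(P̂_{≤r} − P)α‖ ≤ 2‖P̂_{≤r} − P‖_op ‖α‖`. -/
theorem proj_diff_norm_bound {d : ℕ}
    (P Phat Ple Pgt : Matrix (Fin d) (Fin d) ℝ)
    (hPsymm : P.IsSymm) (hPidem : P * P = P)
    (hHatsymm : Phat.IsSymm) (hHatidem : Phat * Phat = Phat)
    (hLesymm : Ple.IsSymm) (hLeidem : Ple * Ple = Ple)
    (hGtsymm : Pgt.IsSymm) (hGtidem : Pgt * Pgt = Pgt)
    (hdecomp : Phat = Ple + Pgt) (horth : Ple * Pgt = 0)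
    (α : Fin d → ℝ) (hα : P *ᵥ α = α) :
    enorm4 ((Phat - P) *ᵥ α) ≤ 2 * enorm4 ((Ple - P) *ᵥ α) ∧
    2 * enorm4 ((Ple - P) *ᵥ α) ≤ 2 * opNorm4 (Ple - P) * enorm4 α :=
  proj_diff_norm_bound_general P Phat Ple Pgt hLesymm hGtsymm hGtidem hdecomp horth α hα
end

section
/- Let Y = Xᵀ B α + η where X ∈ R^{d×n}, B ∈ R^{d×r} has orthonormal columns, α ∈ R^r, η ∈ R^n, and let B-hat ∈ R^{d×r̃} have orthonormal columns with Bᵀ-hat X Xᵀ B-hat invertible. Define α-hat = (B-hatᵀ X Xᵀ B-hat)^{-1} B-hatᵀ X Y. Then B-hat α-hat − B α = (P-hat − P)ᾱ + B-hat (B-hatᵀ X Xᵀ B-hat)^{-1} B-hatᵀ X Xᵀ (P − P-hat) ᾱ + B-hat (B-hatᵀ X Xᵀ B-hat)^{-1} B-hatᵀ X η, where P = B Bᵀ, P-hat = B-hat B-hatᵀ, and ᾱ = B α (viewing ᾱ as the d-dimensional vector with Pᾱ = ᾱ). -/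
open Matrix

/-!
`S = B̂ (B̂ᵀXXᵀB̂)⁻¹ B̂ᵀXXᵀ` is an oblique projection onto the column space of `B̂`, so
`SP̂ = P̂`, while `Pᾱ = ᾱ`. The error is `Sᾱ - ᾱ` plus the image of `η`, and adding and
subtracting `P̂ᾱ` splits `Sᾱ - ᾱ` into the two bias terms.
-/

namespace Matrix

variable {R m k : Type*} [CommRing R] [Fintype m] [Fintype k] [DecidableEq k]

/-- The projection onto the column space of `A` along the kernel of `C` (when `CA` is invertible). -/
noncomputable def obliqueProjection (A : Matrix m k R) (C : Matrix k m R) : Matrix m m R :=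
  A * (C * A)⁻¹ * C

theorem obliqueProjection_mul_self {A : Matrix m k R} {C : Matrix k m R} (h : IsUnit (C * A)) :
    obliqueProjection A C * A = A := by
  rw [obliqueProjection, Matrix.mul_assoc, Matrix.mul_assoc,
    nonsing_inv_mul _ ((isUnit_iff_isUnit_det _).mp h), Matrix.mul_one]

theorem mul_transpose_mulVec_mulVec_of_transpose_mul_eq_one {B : Matrix m k R}
    (hB : Bᵀ * B = 1) (α : k → R) : (B * Bᵀ) *ᵥ (B *ᵥ α) = B *ᵥ α := by
  rw [mulVec_mulVec, Matrix.mul_assoc, hB, Matrix.mul_one]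

theorem mulVec_sub_self_eq_of_mul_eq_of_mulVec_eq {S P Q : Matrix m m R} {v : m → R}
    (hSQ : S * Q = Q) (hPv : P *ᵥ v = v) :
    S *ᵥ v - v = (Q - P) *ᵥ v + (S * (P - Q)) *ᵥ v := by
  rw [Matrix.mul_sub, hSQ, sub_mulVec, sub_mulVec, ← mulVec_mulVec, hPv]
  abel

end Matrix

theorem lsq_error_decomposition_general {d n r rt : ℕ}
    (X : Matrix (Fin d) (Fin n) ℝ)
    (B : Matrix (Fin d) (Fin r) ℝ) (hB : Bᵀ * B = 1)
    (Bhat : Matrix (Fin d) (Fin rt) ℝ)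
    (α : Fin r → ℝ) (η : Fin n → ℝ)
    (Y : Fin n → ℝ) (hY : Y = Xᵀ *ᵥ (B *ᵥ α) + η)
    (hinv : IsUnit (Bhatᵀ * X * Xᵀ * Bhat))
    (αhat : Fin rt → ℝ)
    (hαhat : αhat = (Bhatᵀ * X * Xᵀ * Bhat)⁻¹ *ᵥ (Bhatᵀ *ᵥ (X *ᵥ Y)))
    (P Phat : Matrix (Fin d) (Fin d) ℝ)
    (hP : P = B * Bᵀ) (hPhat : Phat = Bhat * Bhatᵀ)
    (abar : Fin d → ℝ) (habar : abar = B *ᵥ α) :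
    Bhat *ᵥ αhat - B *ᵥ α
      = (Phat - P) *ᵥ abar
        + (Bhat * (Bhatᵀ * X * Xᵀ * Bhat)⁻¹ * (Bhatᵀ * X * Xᵀ * (P - Phat))) *ᵥ abar
        + Bhat *ᵥ ((Bhatᵀ * X * Xᵀ * Bhat)⁻¹ *ᵥ (Bhatᵀ *ᵥ (X *ᵥ η))) := by
  subst hY hαhat hP hPhat habar
  set S := obliqueProjection Bhat (Bhatᵀ * X * Xᵀ) with hS_def
  have hsplit : Bhat *ᵥ ((Bhatᵀ * X * Xᵀ * Bhat)⁻¹ *ᵥ (Bhatᵀ *ᵥ (X *ᵥ (Xᵀ *ᵥ (B *ᵥ α) + η))))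
      = S *ᵥ (B *ᵥ α) + Bhat *ᵥ ((Bhatᵀ * X * Xᵀ * Bhat)⁻¹ *ᵥ (Bhatᵀ *ᵥ (X *ᵥ η))) := by
    simp only [hS_def, obliqueProjection, mulVec_add, mulVec_mulVec, Matrix.mul_assoc]
  have hS : S * (Bhat * Bhatᵀ) = Bhat * Bhatᵀ := by
    rw [← Matrix.mul_assoc, obliqueProjection_mul_self hinv]
  rw [hsplit, add_sub_right_comm, mulVec_sub_self_eq_of_mul_eq_of_mulVec_eq hS
    (mul_transpose_mulVec_mulVec_of_transpose_mul_eq_one hB α)]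
  simp only [hS_def, obliqueProjection, Matrix.mul_assoc]

/-- Error decomposition for the least-squares estimate in an estimated
representation: with `Y = Xᵀ B α + η`, `α̂ = (B̂ᵀXXᵀB̂)⁻¹ B̂ᵀ X Y`, `P = BBᵀ`,
`P̂ = B̂B̂ᵀ` and `ᾱ = Bα`,
`B̂α̂ − Bα = (P̂ − P)ᾱ + B̂(B̂ᵀXXᵀB̂)⁻¹ B̂ᵀXXᵀ(P − P̂)ᾱ + B̂(B̂ᵀXXᵀB̂)⁻¹ B̂ᵀXη`. -/
theorem lsq_error_decomposition {d n r rt : ℕ}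
    (X : Matrix (Fin d) (Fin n) ℝ)
    (B : Matrix (Fin d) (Fin r) ℝ) (hB : Bᵀ * B = 1)
    (Bhat : Matrix (Fin d) (Fin rt) ℝ) (hBhat : Bhatᵀ * Bhat = 1)
    (α : Fin r → ℝ) (η : Fin n → ℝ)
    (Y : Fin n → ℝ) (hY : Y = Xᵀ *ᵥ (B *ᵥ α) + η)
    (hinv : IsUnit (Bhatᵀ * X * Xᵀ * Bhat))
    (αhat : Fin rt → ℝ)
    (hαhat : αhat = (Bhatᵀ * X * Xᵀ * Bhat)⁻¹ *ᵥ (Bhatᵀ *ᵥ (X *ᵥ Y)))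
    (P Phat : Matrix (Fin d) (Fin d) ℝ)
    (hP : P = B * Bᵀ) (hPhat : Phat = Bhat * Bhatᵀ)
    (abar : Fin d → ℝ) (habar : abar = B *ᵥ α) :
    Bhat *ᵥ αhat - B *ᵥ α
      = (Phat - P) *ᵥ abar
        + (Bhat * (Bhatᵀ * X * Xᵀ * Bhat)⁻¹ * (Bhatᵀ * X * Xᵀ * (P - Phat))) *ᵥ abar
        + Bhat *ᵥ ((Bhatᵀ * X * Xᵀ * Bhat)⁻¹ *ᵥ (Bhatᵀ *ᵥ (X *ᵥ η))) :=
  lsq_error_decomposition_general X B hB Bhat α η Y hY hinv αhat hαhat P Phat hP hPhat abar habar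
end
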